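/- arXiv:1201.6645 — 3 statements merged into one kernel-verified Lean document; each statement's English description precedes it below -/
import Mathlib

section
/- The sequence p_k = (2/(4^k k)) * binomial(2k-2, k-1) satisfies Σ_{k≥1} p_k = 1. -/
/-!
With `a n = C(2n, n) / 4 ^ n`, the recursion `a (n + 1) = a n * (2n + 1) / (2n + 2)` shows that the
`k`-th term of the series is `a k - a (k + 1)`, so the series telescopes to `a 0 - lim a = 1`.
The same recursion gives `a n ^ 2 ≤ 1 / (n + 1)`, hence `a n → 0`.
-/

open Filter Topology Nat

theorem hasSum_sub_succ_of_antitone {f : ℕ → ℝ} {l : ℝ} (hf : Antitone f)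
    (hl : Tendsto f atTop (𝓝 l)) : HasSum (fun n ↦ f n - f (n + 1)) (f 0 - l) := by
  rw [hasSum_iff_tendsto_nat_of_nonneg fun n ↦ sub_nonneg.2 (hf n.le_succ)]
  simpa only [Finset.sum_range_sub'] using hl.const_sub (f 0)

theorem centralBinom_succ_div_four_pow (n : ℕ) :
    (centralBinom (n + 1) : ℝ) / 4 ^ (n + 1) =
      centralBinom n / 4 ^ n * ((2 * n + 1) / (2 * n + 2)) := by
  have h : ((n : ℝ) + 1) * centralBinom (n + 1) = 2 * (2 * n + 1) * centralBinom n := by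
    exact_mod_cast succ_mul_centralBinom_succ n
  field_simp
  rw [pow_succ]
  linear_combination 2 * 4 ^ n * h

theorem centralBinom_div_four_pow_antitone :
    Antitone fun n ↦ (centralBinom n : ℝ) / 4 ^ n := by
  refine antitone_nat_of_succ_le fun n ↦ ?_
  rw [centralBinom_succ_div_four_pow]
  exact mul_le_of_le_one_right (by positivity) ((div_le_one (by positivity)).2 (by linarith))

theorem sq_centralBinom_div_four_pow_le (n : ℕ) :
    ((centralBinom n : ℝ) / 4 ^ n) ^ 2 ≤ 1 / (n + 1) := by
  induction n with
  | zero => simp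
  | succ n ih =>
    have hratio : ((2 * n + 1) / (2 * n + 2) : ℝ) ^ 2 ≤ (n + 1) / (n + 2) := by
      rw [div_pow, div_le_div_iff₀ (by positivity) (by positivity)]
      nlinarith
    calc ((centralBinom (n + 1) : ℝ) / 4 ^ (n + 1)) ^ 2
        = ((centralBinom n : ℝ) / 4 ^ n) ^ 2 * ((2 * n + 1 : ℝ) / (2 * n + 2)) ^ 2 := by
          rw [centralBinom_succ_div_four_pow, mul_pow]
      _ ≤ 1 / (n + 1) * ((n + 1 : ℝ) / (n + 2)) := by gcongr
      _ = 1 / ((n + 1 : ℕ) + 1) := by field_simp; push_cast; ring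

theorem tendsto_centralBinom_div_four_pow :
    Tendsto (fun n ↦ (centralBinom n : ℝ) / 4 ^ n) atTop (𝓝 0) := by
  have hsqrt : Tendsto (fun n : ℕ ↦ √(1 / ((n : ℝ) + 1))) atTop (𝓝 0) := by
    simpa using tendsto_one_div_add_atTop_nhds_zero_nat.sqrt
  refine squeeze_zero (fun n ↦ by positivity) (fun n ↦ ?_) hsqrt
  exact Real.le_sqrt_of_sq_le (sq_centralBinom_div_four_pow_le n)

theorem centralBinom_div_four_pow_sub_succ (n : ℕ) :
    (centralBinom n : ℝ) / 4 ^ n - centralBinom (n + 1) / 4 ^ (n + 1) =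
      2 / (4 ^ (n + 1) * (n + 1)) * centralBinom n := by
  rw [centralBinom_succ_div_four_pow, pow_succ]
  field_simp
  ring

/-- The sequence `p k = (2/(4^k k)) * binomial (2k-2) (k-1)`, `k ≥ 1`, sums to `1`. -/
theorem stmt1 :
    HasSum (fun k : ℕ =>
      2 / (4 ^ (k + 1) * ((k : ℝ) + 1)) * (Nat.choose (2 * (k + 1) - 2) k : ℝ)) 1 := by
  have hchoose (k : ℕ) : Nat.choose (2 * (k + 1) - 2) k = centralBinom k := by
    rw [centralBinom, show 2 * (k + 1) - 2 = 2 * k by omega]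
  simpa [hchoose, ← centralBinom_div_four_pow_sub_succ] using
    hasSum_sub_succ_of_antitone centralBinom_div_four_pow_antitone
      tendsto_centralBinom_div_four_pow
end

section
/- Under the assumptions of the previous lemma, any solution (c_k)_{k≥1} of (E_n) equals c_k = α^n_k q_n^{k-1}/f_n'(q_n); in particular (E_n) has a unique solution. -/
/-!
The recursion `(E_n)` determines `c_k` for `k ≥ 2` from `c_1`, and rescaling `α^n` by
`c_k = m α^n_k r^k` (with `m = Σ c_l`) turns the recursion of `α^n` into `(E_n)`. Hence every
solution has this shape with `r = c_1 / m ≥ 0`; the normalisation `Σ k c_k = 1` rules out `r = 0`.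
Then `Σ c_k = m` says `f_n(r) = 1`, so `r = q_n`, and `Σ k c_k = 1` reads `m q_n f_n'(q_n) = 1`.
-/

open Finset

def SolvesConvolutionRecursion (w : ℕ → ℝ) (s : ℝ) (c : ℕ → ℝ) : Prop :=
  ∀ k : ℕ, 2 ≤ k → w k * c k = s * ∑ i ∈ Ico 1 k, c i * c (k - i)

namespace SolvesConvolutionRecursion

variable {w : ℕ → ℝ} {s : ℝ} {c d : ℕ → ℝ}

theorem eq_of_apply_one_eq (hw : ∀ k, 2 ≤ k → w k ≠ 0) (hc : SolvesConvolutionRecursion w s c)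
    (hd : SolvesConvolutionRecursion w s d) (h1 : c 1 = d 1) : ∀ k, 1 ≤ k → c k = d k := by
  intro k
  induction k using Nat.strong_induction_on with
  | _ k ih =>
    intro hk
    rcases hk.eq_or_lt with rfl | hk2
    · exact h1
    have hconv : ∑ i ∈ Ico 1 k, c i * c (k - i) = ∑ i ∈ Ico 1 k, d i * d (k - i) := by
      refine sum_congr rfl fun i hi => ?_
      obtain ⟨hi1, hik⟩ := mem_Ico.1 hi
      rw [ih i hik hi1, ih (k - i) (by omega) (by omega)]
    exact mul_left_cancel₀ (hw k hk2) (by rw [hc k hk2, hd k hk2, hconv])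

theorem scale (hα : SolvesConvolutionRecursion w 1 c) {m : ℝ} (hm : m ≠ 0) (r : ℝ) :
    SolvesConvolutionRecursion w (1 / m) (fun k => m * c k * r ^ k) := by
  intro k hk
  have hpow : ∀ i ∈ Ico 1 k, m * c i * r ^ i * (m * c (k - i) * r ^ (k - i))
      = m ^ 2 * r ^ k * (c i * c (k - i)) := by
    intro i hi
    rw [show r ^ k = r ^ i * r ^ (k - i) by rw [← pow_add, Nat.add_sub_cancel' (mem_Ico.1 hi).2.le]]
    ring
  rw [sum_congr rfl hpow, ← mul_sum, ← one_mul (∑ i ∈ Ico 1 k, c i * c (k - i)), ← hα k hk]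
  field_simp

theorem exists_eq_scale (hw : ∀ k, 2 ≤ k → w k ≠ 0) {α : ℕ → ℝ}
    (hα : SolvesConvolutionRecursion w 1 α) (hα0 : α 0 = 0) (hα1 : α 1 = 1) {m : ℝ} (hm : m ≠ 0)
    (hc : SolvesConvolutionRecursion w (1 / m) c) (hc0 : c 0 = 0) :
    ∃ r : ℝ, c = fun k => m * α k * r ^ k := by
  refine ⟨c 1 / m, funext fun k => ?_⟩
  rcases Nat.eq_zero_or_pos k with rfl | hk
  · simp [hc0, hα0]
  · exact hc.eq_of_apply_one_eq hw (hα.scale hm _) (by rw [hα1]; field_simp) k hk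

end SolvesConvolutionRecursion

theorem stmt8_general (n : ℕ) (α : ℕ → ℝ) (q f' m0 : ℝ) (c : ℕ → ℝ)
    (hα0 : α 0 = 0) (hα1 : α 1 = 1)
    (hαr : ∀ k : ℕ, 2 ≤ k →
      (2 + ((k : ℝ) - 1) / (n : ℝ)) * α k = ∑ i ∈ Finset.Ico 1 k, α i * α (k - i))
    (huniq : ∀ q' : ℝ, 0 < q' → HasSum (fun k : ℕ => α k * q' ^ k) 1 → q' = q)
    (hf' : HasSum (fun k : ℕ => (k : ℝ) * α k * q ^ (k - 1)) f')
    (hc0 : c 0 = 0) (hcpos : ∀ k, 0 ≤ c k)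
    (hm1 : HasSum (fun k : ℕ => (k : ℝ) * c k) 1)
    (hm0 : HasSum c m0) (hm0pos : 0 < m0)
    (hrec : ∀ k : ℕ, 2 ≤ k →
      (2 + ((k : ℝ) - 1) / (n : ℝ)) * c k = (1 / m0) * ∑ i ∈ Finset.Ico 1 k, c i * c (k - i)) :
    ∀ k : ℕ, 1 ≤ k → c k = α k * q ^ (k - 1) / f' := by
  have hw : ∀ k : ℕ, 2 ≤ k → 2 + ((k : ℝ) - 1) / (n : ℝ) ≠ 0 := fun k hk =>
    (add_pos_of_pos_of_nonneg two_pos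
      (div_nonneg (sub_nonneg.2 (Nat.one_le_cast.2 (by omega))) n.cast_nonneg)).ne'
  obtain ⟨r, rfl⟩ := SolvesConvolutionRecursion.exists_eq_scale hw
    (fun k hk => by rw [one_mul]; exact hαr k hk) hα0 hα1 hm0pos.ne' hrec hc0
  have hr : 0 < r := by
    refine lt_of_le_of_ne (by simpa [hα1, hm0pos] using hcpos 1) fun hr0 => ?_
    subst hr0
    have hzero : (fun k : ℕ => (k : ℝ) * (m0 * α k * 0 ^ k)) = 0 := by
      funext k; rcases k with _ | k <;> simp
    exact one_ne_zero (hm1.unique (hzero ▸ hasSum_zero))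
  have hfr : HasSum (fun k => α k * r ^ k) 1 :=
    (hasSum_mul_left_iff hm0pos.ne').1 (by simpa [mul_assoc] using hm0)
  obtain rfl := huniq r hr hfr
  have hmean : 1 = m0 * r * f' := by
    have hterm (k : ℕ) : (k : ℝ) * (m0 * α k * r ^ k) = m0 * r * (k * α k * r ^ (k - 1)) := by
      rcases k with _ | k
      · simp
      · rw [Nat.add_sub_cancel, pow_succ]; ring
    exact hm1.unique (by simpa only [← hterm] using hf'.mul_left (m0 * r))
  intro k hk
  show m0 * α k * r ^ k = _
  rw [eq_div_iff (right_ne_zero_of_mul (hmean ▸ one_ne_zero)),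
    show r ^ k = r ^ (k - 1) * r by rw [← pow_succ, Nat.sub_add_cancel hk]]
  linear_combination (-(α k * r ^ (k - 1))) * hmean

/-- Any solution `(c_k)_{k≥1}` of `(E_n)` equals `c_k = α^n_k q_n^{k-1}/f_n'(q_n)`, where `q_n`
is the unique positive point with `f_n(q_n) = 1`; in particular `(E_n)` has a unique solution. -/
theorem stmt8 (n : ℕ) (hn : 1 ≤ n) (α : ℕ → ℝ) (q f' m0 : ℝ) (c : ℕ → ℝ)
    (hα0 : α 0 = 0) (hα1 : α 1 = 1)
    (hαr : ∀ k : ℕ, 2 ≤ k →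
      (2 + ((k : ℝ) - 1) / (n : ℝ)) * α k = ∑ i ∈ Finset.Ico 1 k, α i * α (k - i))
    (hq : 0 < q)
    (hf : HasSum (fun k : ℕ => α k * q ^ k) 1)
    (huniq : ∀ q' : ℝ, 0 < q' → HasSum (fun k : ℕ => α k * q' ^ k) 1 → q' = q)
    (hf' : HasSum (fun k : ℕ => (k : ℝ) * α k * q ^ (k - 1)) f')
    (hc0 : c 0 = 0) (hcpos : ∀ k, 0 ≤ c k)
    (hm1 : HasSum (fun k : ℕ => (k : ℝ) * c k) 1)
    (hm0 : HasSum c m0) (hm0pos : 0 < m0)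
    (hrec : ∀ k : ℕ, 2 ≤ k →
      (2 + ((k : ℝ) - 1) / (n : ℝ)) * c k = (1 / m0) * ∑ i ∈ Finset.Ico 1 k, c i * c (k - i)) :
    ∀ k : ℕ, 1 ≤ k → c k = α k * q ^ (k - 1) / f' :=
  stmt8_general n α q f' m0 c hα0 hα1 hαr huniq hf' hc0 hcpos hm1 hm0 hm0pos hrec
end

section
/- If (c^n_k)_{k≥1} solves (E_n) and φ, ψ : ℕ → ℝ have at most polynomial growth, then (1/m_0(c^n)) Σ_{k,l≥1} [φ(k+l) − φ(k) − φ(l)] c^n_k c^n_l = (1/n) Σ_{k≥2} [φ(k) − k φ(1)] (k−1) c^n_k, and (2/m_0(c^n)) Σ_{k,l≥1} [ψ(k+l) − ψ(k)] k c^n_k c^n_l = (1/n) Σ_{k≥2}[ψ(k) − ψ(1)] k (k−1) c^n_k. -/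
/-!
Summing the recurrence against a weight `w` replaces the convolution `Σ_{i+j=m} c_i c_j` by
`m0 (2 + (m-1)/n) c_m` for `m ≥ 2`, which gives
`Σ_{k,l} w(k+l) c_k c_l = m0 (2 Σ_k w_k c_k + (1/n) Σ_k w_k (k-1) c_k - 2 w_1 c_1)`.
For `w k = k` the left side is `2 m0` because `Σ k c_k = 1`, so `Σ k(k-1) c_k = 2 n c_1`; this
turns the boundary term `w_1 c_1` into the `φ(1)`, `ψ(1)` terms. The first identity is the
formula for `w = φ`; for the second, swapping `k` and `l` replaces the factor `k` by `(k+l)/2`,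
and the formula is applied to `w k = k ψ(k)`. Every rearrangement of the double series is
justified because polynomially growing weights are summable against `c`, which has an
exponential moment.
-/

open Asymptotics Filter Finset

def HasPolyGrowth (w : ℕ → ℝ) : Prop :=
  ∃ N : ℕ, w =O[⊤] fun k => ((k : ℝ) + 1) ^ N

def HasPolyMoments (c : ℕ → ℝ) : Prop :=
  ∀ N : ℕ, Summable fun k : ℕ => ((k : ℝ) + 1) ^ N * ‖c k‖

namespace HasPolyGrowth

variable {w v : ℕ → ℝ}

theorem of_abs_le_rpow {C d : ℝ} (h : ∀ k, |w k| ≤ C * ((k : ℝ) + 1) ^ d) :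
    HasPolyGrowth w := by
  refine ⟨⌈d⌉₊, isBigO_of_le' (c := |C|) ⊤ fun k => ?_⟩
  have hk : (1 : ℝ) ≤ (k : ℝ) + 1 := le_add_of_nonneg_left k.cast_nonneg
  rw [Real.norm_eq_abs, Real.norm_of_nonneg (by positivity), ← Real.rpow_natCast]
  calc |w k| ≤ C * ((k : ℝ) + 1) ^ d := h k
    _ ≤ |C| * ((k : ℝ) + 1) ^ d := by gcongr; exact le_abs_self C
    _ ≤ |C| * ((k : ℝ) + 1) ^ (⌈d⌉₊ : ℝ) := by gcongr; exact Nat.le_ceil d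

theorem natCast_sub (a : ℝ) : HasPolyGrowth fun k => (k : ℝ) - a := by
  refine ⟨1, isBigO_of_le' (c := 1 + |a|) ⊤ fun k => ?_⟩
  have hk : (0 : ℝ) ≤ k := k.cast_nonneg
  rw [Real.norm_eq_abs, Real.norm_of_nonneg (by positivity), pow_one]
  calc |(k : ℝ) - a| ≤ |(k : ℝ)| + |a| := abs_sub _ _
    _ ≤ (1 + |a|) * ((k : ℝ) + 1) := by
      rw [abs_of_nonneg hk]; nlinarith [abs_nonneg a]

theorem natCast : HasPolyGrowth fun k => (k : ℝ) := by
  simpa using natCast_sub 0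

theorem mul (hw : HasPolyGrowth w) (hv : HasPolyGrowth v) :
    HasPolyGrowth fun k => w k * v k := by
  obtain ⟨a, ha⟩ := hw
  obtain ⟨b, hb⟩ := hv
  exact ⟨a + b, by simpa only [pow_add] using ha.mul hb⟩

end HasPolyGrowth

theorem add_add_one_le_mul (k l : ℕ) :
    ((k + l : ℕ) : ℝ) + 1 ≤ ((k : ℝ) + 1) * ((l : ℝ) + 1) := by
  push_cast; nlinarith [k.cast_nonneg (α := ℝ), l.cast_nonneg (α := ℝ)]

namespace HasPolyMoments

variable {c w : ℕ → ℝ}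

theorem of_summable_geometric {u : ℝ} (hu : 1 < u) (hpos : ∀ k, 0 ≤ c k)
    (hs : Summable fun k => u ^ k * c k) : HasPolyMoments c := by
  intro N
  have hpow : (fun k : ℕ => ((k : ℝ) + 1) ^ N) =O[atTop] fun k => u * u ^ k := by
    simpa [Function.comp_def, pow_succ'] using
      (isLittleO_pow_const_const_pow_of_one_lt (R := ℝ) N hu).isBigO.comp_tendsto
        (tendsto_add_atTop_nat 1)
  refine summable_of_isBigO_nat (hs.mul_left u) ?_
  simpa only [Real.norm_of_nonneg (hpos _), mul_assoc] using hpow.mul (isBigO_refl c atTop)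

theorem summable_norm_mul (hc : HasPolyMoments c) (hw : HasPolyGrowth w) :
    Summable fun k => ‖w k * c k‖ := by
  obtain ⟨N, hN⟩ := hw
  refine summable_of_isBigO (hc N) ?_
  exact ((hN.mul (isBigO_refl c ⊤).norm_right).mono le_top).norm_left

theorem summable_mul (hc : HasPolyMoments c) (hw : HasPolyGrowth w) :
    Summable fun k => w k * c k :=
  (hc.summable_norm_mul hw).of_norm

theorem summable_mul_mul {F : ℕ × ℕ → ℝ} (hc : HasPolyMoments c)
    (hF : ∃ N : ℕ, F =O[⊤] fun p => (((p.1 + p.2 : ℕ) : ℝ) + 1) ^ N) :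
    Summable fun p : ℕ × ℕ => F p * c p.1 * c p.2 := by
  obtain ⟨N, hN⟩ := hF
  have hsplit : (fun p : ℕ × ℕ => (((p.1 + p.2 : ℕ) : ℝ) + 1) ^ N) =O[⊤]
      fun p => ((p.1 : ℝ) + 1) ^ N * ((p.2 : ℝ) + 1) ^ N := by
    refine isBigO_of_le ⊤ fun p => ?_
    rw [← mul_pow, norm_pow, norm_pow, Real.norm_of_nonneg (by positivity),
      Real.norm_of_nonneg (by positivity)]
    exact pow_le_pow_left₀ (by positivity) (add_add_one_le_mul p.1 p.2) N
  have hc1 := (isBigO_refl (fun p : ℕ × ℕ => c p.1) ⊤).norm_right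
  have hc2 := (isBigO_refl (fun p : ℕ × ℕ => c p.2) ⊤).norm_right
  exact summable_of_isBigO
    ((hc N).mul_of_nonneg (hc N) (fun _ => by positivity) (fun _ => by positivity))
    ((((hN.trans hsplit).mul hc1).mul hc2).mono le_top |>.congr_right fun p => by ring)

theorem summable_comp_add_mul_mul (hc : HasPolyMoments c) (hw : HasPolyGrowth w) :
    Summable fun p : ℕ × ℕ => w (p.1 + p.2) * c p.1 * c p.2 :=
  let ⟨N, hN⟩ := hw
  hc.summable_mul_mul ⟨N, hN.comp_tendsto tendsto_top⟩

theorem summable_comp_add_mul_fst_mul_mul (hc : HasPolyMoments c) (hw : HasPolyGrowth w) :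
    Summable fun p : ℕ × ℕ => w (p.1 + p.2) * (p.1 : ℝ) * c p.1 * c p.2 := by
  obtain ⟨N, hN⟩ := hw.mul HasPolyGrowth.natCast
  refine hc.summable_mul_mul
    ⟨N, (isBigO_of_le ⊤ fun p => ?_).trans (hN.comp_tendsto tendsto_top)⟩
  simp only [Function.comp_apply, norm_mul, Real.norm_natCast]
  gcongr
  exact_mod_cast Nat.le_add_right p.1 p.2

end HasPolyMoments

theorem tsum_prod_eq_tsum_sum_antidiagonal {α : Type*} [AddCommMonoid α] [TopologicalSpace α]
    [ContinuousAdd α] [T3Space α] {F : ℕ × ℕ → α} (hF : Summable F) :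
    ∑' p, F p = ∑' m, ∑ p ∈ antidiagonal m, F p := by
  simp_rw [← Finset.sum_finset_coe (f := F), ← tsum_fintype (L := .unconditional _)]
  rw [← HasAntidiagonal.sigmaAntidiagonalEquivProd.tsum_eq F]
  exact (HasAntidiagonal.sigmaAntidiagonalEquivProd.summable_iff.2 hF).tsum_sigma'
    fun m => (hasSum_fintype _).summable

theorem two_mul_tsum_comp_add_mul_fst {f a : ℕ → ℝ}
    (hs : Summable fun p : ℕ × ℕ => f (p.1 + p.2) * (p.1 : ℝ) * a p.1 * a p.2) :
    2 * ∑' p : ℕ × ℕ, f (p.1 + p.2) * (p.1 : ℝ) * a p.1 * a p.2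
      = ∑' p : ℕ × ℕ, f (p.1 + p.2) * ((p.1 + p.2 : ℕ) : ℝ) * a p.1 * a p.2 := by
  have hswap :=
    (Equiv.prodComm ℕ ℕ).tsum_eq fun p => f (p.1 + p.2) * (p.1 : ℝ) * a p.1 * a p.2
  have hs' := (Equiv.prodComm ℕ ℕ).summable_iff.2 hs
  simp only [Equiv.prodComm_apply, Prod.fst_swap, Prod.snd_swap, add_comm (_ : ℕ),
    Function.comp_def] at hswap hs'
  rw [two_mul]
  nth_rw 2 [← hswap]
  rw [← hs.tsum_add hs']
  congr 1 with p
  push_cast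
  ring

section Equilibrium

variable {n : ℕ} {c : ℕ → ℝ} {m0 : ℝ} (hc0 : c 0 = 0) (hm0 : m0 ≠ 0)
  (hrec : ∀ k : ℕ, 2 ≤ k →
    (2 + ((k : ℝ) - 1) / (n : ℝ)) * c k = (1 / m0) * ∑ i ∈ Finset.Ico 1 k, c i * c (k - i))

include hc0 hm0 hrec in
theorem sum_antidiagonal_mul_eq (m : ℕ) :
    ∑ p ∈ antidiagonal m, c p.1 * c p.2
      = m0 * ((2 + ((m : ℝ) - 1) / n) * c m) - if m = 1 then 2 * m0 * c 1 else 0 := by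
  rw [Nat.sum_antidiagonal_eq_sum_range_succ (fun i j => c i * c j)]
  rcases lt_or_ge m 2 with hm | hm
  · interval_cases m
    · simp [hc0]
    · simp [sum_range_succ, hc0]; ring
  · rw [sum_range_succ, range_eq_Ico, sum_eq_sum_Ico_succ_bot (by omega), hrec m hm,
      if_neg (by omega)]
    simp only [hc0, Nat.sub_self, Nat.sub_zero, zero_mul, mul_zero, zero_add, add_zero, sub_zero]
    field_simp

include hc0 hm0 hrec in
theorem tsum_comp_add_mul_mul_eq (hc : HasPolyMoments c) {w : ℕ → ℝ} (hw : HasPolyGrowth w) :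
    ∑' p : ℕ × ℕ, w (p.1 + p.2) * c p.1 * c p.2
      = m0 * (2 * ∑' k, w k * c k + (1 / n) * ∑' k, w k * ((k : ℝ) - 1) * c k
        - 2 * w 1 * c 1) := by
  have hfiber (m : ℕ) : ∑ p ∈ antidiagonal m, w (p.1 + p.2) * c p.1 * c p.2
      = m0 * (2 * (w m * c m) + (1 / n) * (w m * ((m : ℝ) - 1) * c m)
        - 2 * if m = 1 then w 1 * c 1 else 0) := by
    rw [sum_congr rfl fun p hp => by rw [mem_antidiagonal.1 hp, mul_assoc],
      ← mul_sum, sum_antidiagonal_mul_eq hc0 hm0 hrec]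
    split_ifs with h
    · subst h; ring
    · ring
  have hsum := (((hc.summable_mul hw).hasSum.mul_left 2).add
    ((hc.summable_mul (hw.mul (HasPolyGrowth.natCast_sub 1))).hasSum.mul_left (1 / (n : ℝ)))).sub
    ((hasSum_ite_eq 1 (w 1 * c 1)).mul_left 2) |>.mul_left m0
  rw [tsum_prod_eq_tsum_sum_antidiagonal (hc.summable_comp_add_mul_mul hw),
    tsum_congr hfiber, hsum.tsum_eq]
  ring

variable (hmass : HasSum c m0) (hm1 : HasSum (fun k : ℕ => (k : ℝ) * c k) 1)

include hc0 hm0 hrec hmass hm1 in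
theorem tsum_mul_sub_one_mul_eq (hn : n ≠ 0) (hc : HasPolyMoments c) :
    ∑' k : ℕ, (k : ℝ) * ((k : ℝ) - 1) * c k = 2 * n * c 1 := by
  have hk := hc.summable_norm_mul HasPolyGrowth.natCast
  have hsum := (hm1.mul hmass (summable_mul_of_summable_norm hk hmass.summable.norm)).add
    (hmass.mul hm1 (summable_mul_of_summable_norm hmass.summable.norm hk))
  have hweak := tsum_comp_add_mul_mul_eq hc0 hm0 hrec hc HasPolyGrowth.natCast
  rw [(tsum_congr fun p => by push_cast; ring).trans hsum.tsum_eq, hm1.tsum_eq,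
    Nat.cast_one] at hweak
  have hn' : (n : ℝ) ≠ 0 := Nat.cast_ne_zero.2 hn
  field_simp at hweak
  linear_combination -hweak

include hc0 hm0 hrec hmass hm1 in
theorem weak_form_sub_sub (hn : n ≠ 0) (hc : HasPolyMoments c) {φ : ℕ → ℝ}
    (hφ : HasPolyGrowth φ) :
    (1 / m0) * ∑' p : ℕ × ℕ, (φ (p.1 + p.2) - φ p.1 - φ p.2) * c p.1 * c p.2
      = (1 / (n : ℝ)) * ∑' k : ℕ, (φ k - (k : ℝ) * φ 1) * ((k : ℝ) - 1) * c k := by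
  have hk := HasPolyGrowth.natCast.mul (HasPolyGrowth.natCast_sub 1)
  have hA := (hc.summable_mul hφ).hasSum
  have hAc := summable_mul_of_summable_norm (hc.summable_norm_mul hφ) hmass.summable.norm
  have hcA := summable_mul_of_summable_norm hmass.summable.norm (hc.summable_norm_mul hφ)
  have hlhs : ∑' p : ℕ × ℕ, (φ (p.1 + p.2) - φ p.1 - φ p.2) * c p.1 * c p.2
      = ∑' p : ℕ × ℕ, φ (p.1 + p.2) * c p.1 * c p.2 - 2 * m0 * ∑' k, φ k * c k := by
    refine (tsum_congr fun p => ?_).trans ((((hc.summable_comp_add_mul_mul hφ).hasSum.sub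
      (hA.mul hmass hAc)).sub (hmass.mul hA hcA)).tsum_eq.trans ?_) <;> ring
  have hrhs : ∑' k : ℕ, (φ k - (k : ℝ) * φ 1) * ((k : ℝ) - 1) * c k
      = ∑' k : ℕ, φ k * ((k : ℝ) - 1) * c k
        - φ 1 * ∑' k : ℕ, (k : ℝ) * ((k : ℝ) - 1) * c k := by
    refine (tsum_congr fun k => ?_).trans
      ((hc.summable_mul (hφ.mul (HasPolyGrowth.natCast_sub 1))).hasSum.sub
        ((hc.summable_mul hk).hasSum.mul_left (φ 1))).tsum_eq
    ring
  rw [hlhs, hrhs, tsum_comp_add_mul_mul_eq hc0 hm0 hrec hc hφ,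
    tsum_mul_sub_one_mul_eq hc0 hm0 hrec hmass hm1 hn hc]
  field_simp
  ring

include hc0 hm0 hrec hmass hm1 in
theorem weak_form_mul_fst (hn : n ≠ 0) (hc : HasPolyMoments c) {ψ : ℕ → ℝ}
    (hψ : HasPolyGrowth ψ) :
    (2 / m0) * ∑' p : ℕ × ℕ, (ψ (p.1 + p.2) - ψ p.1) * (p.1 : ℝ) * c p.1 * c p.2
      = (1 / (n : ℝ)) * ∑' k : ℕ, (ψ k - ψ 1) * (k : ℝ) * ((k : ℝ) - 1) * c k := by
  have hk := HasPolyGrowth.natCast.mul (HasPolyGrowth.natCast_sub 1)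
  have hv := hψ.mul HasPolyGrowth.natCast
  have hdiag := hc.summable_comp_add_mul_fst_mul_mul hψ
  have hAc := summable_mul_of_summable_norm (hc.summable_norm_mul hv) hmass.summable.norm
  have hlhs : ∑' p : ℕ × ℕ, (ψ (p.1 + p.2) - ψ p.1) * (p.1 : ℝ) * c p.1 * c p.2
      = ∑' p : ℕ × ℕ, ψ (p.1 + p.2) * (p.1 : ℝ) * c p.1 * c p.2
        - m0 * ∑' k, ψ k * (k : ℝ) * c k := by
    refine (tsum_congr fun p => ?_).trans ((hdiag.hasSum.sub
      ((hc.summable_mul hv).hasSum.mul hmass hAc)).tsum_eq.trans ?_) <;> ring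
  have hrhs : ∑' k : ℕ, (ψ k - ψ 1) * (k : ℝ) * ((k : ℝ) - 1) * c k
      = ∑' k : ℕ, ψ k * (k : ℝ) * ((k : ℝ) - 1) * c k
        - ψ 1 * ∑' k : ℕ, (k : ℝ) * ((k : ℝ) - 1) * c k := by
    refine (tsum_congr fun k => ?_).trans
      ((hc.summable_mul (hv.mul (HasPolyGrowth.natCast_sub 1))).hasSum.sub
        ((hc.summable_mul hk).hasSum.mul_left (ψ 1))).tsum_eq
    ring
  have hsymm := two_mul_tsum_comp_add_mul_fst hdiag
  rw [tsum_comp_add_mul_mul_eq hc0 hm0 hrec hc hv, Nat.cast_one, mul_one] at hsymm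
  rw [hlhs, hrhs, tsum_mul_sub_one_mul_eq hc0 hm0 hrec hmass hm1 hn hc]
  field_simp at hsymm ⊢
  linear_combination hsymm

end Equilibrium

/-- The weak forms of the equilibrium equation `(E_n)`: for `(c_k)` a solution of `(E_n)`
(with a geometric moment) and `φ, ψ : ℕ → ℝ` of at most polynomial growth,
`(1/m_0) Σ_{k,l≥1} [φ(k+l) − φ(k) − φ(l)] c_k c_l = (1/n) Σ_{k≥2} [φ(k) − k φ(1)] (k−1) c_k`
and
`(2/m_0) Σ_{k,l≥1} [ψ(k+l) − ψ(k)] k c_k c_l = (1/n) Σ_{k≥2} [ψ(k) − ψ(1)] k (k−1) c_k`. -/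
theorem stmt13 (n : ℕ) (hn : 1 ≤ n) (c : ℕ → ℝ) (m0 : ℝ)
    (hc0 : c 0 = 0) (hpos : ∀ k, 0 ≤ c k)
    (hm1 : HasSum (fun k : ℕ => (k : ℝ) * c k) 1)
    (hm0 : HasSum c m0) (hm0pos : 0 < m0)
    (hgeom : ∃ u : ℝ, 1 < u ∧ Summable (fun k : ℕ => u ^ k * c k))
    (hrec : ∀ k : ℕ, 2 ≤ k →
      (2 + ((k : ℝ) - 1) / (n : ℝ)) * c k = (1 / m0) * ∑ i ∈ Finset.Ico 1 k, c i * c (k - i))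
    (φ ψ : ℕ → ℝ)
    (hφ : ∃ C d : ℝ, ∀ k : ℕ, |φ k| ≤ C * ((k : ℝ) + 1) ^ d)
    (hψ : ∃ C d : ℝ, ∀ k : ℕ, |ψ k| ≤ C * ((k : ℝ) + 1) ^ d) :
    (1 / m0) * ∑' p : ℕ × ℕ, (φ (p.1 + p.2) - φ p.1 - φ p.2) * c p.1 * c p.2
        = (1 / (n : ℝ)) * ∑' k : ℕ, (φ k - (k : ℝ) * φ 1) * ((k : ℝ) - 1) * c k
    ∧ (2 / m0) * ∑' p : ℕ × ℕ, (ψ (p.1 + p.2) - ψ p.1) * (p.1 : ℝ) * c p.1 * c p.2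
        = (1 / (n : ℝ)) * ∑' k : ℕ, (ψ k - ψ 1) * (k : ℝ) * ((k : ℝ) - 1) * c k := by
  obtain ⟨u, hu, hs⟩ := hgeom
  obtain ⟨_, _, hφ⟩ := hφ
  obtain ⟨_, _, hψ⟩ := hψ
  have hc : HasPolyMoments c := .of_summable_geometric hu hpos hs
  have hn0 : n ≠ 0 := Nat.one_le_iff_ne_zero.mp hn
  exact ⟨weak_form_sub_sub hc0 hm0pos.ne' hrec hm0 hm1 hn0 hc (.of_abs_le_rpow hφ),
    weak_form_mul_fst hc0 hm0pos.ne' hrec hm0 hm1 hn0 hc (.of_abs_le_rpow hψ)⟩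
end
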